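/- Let p be a prime, r ≥ 1, and let G be a finite abelian group of order n = p^r. Let g : {1,…,n} → G be a zero-sum sequence, i.e. ∑_{i=1}^n g_i = 0. Then ∑_{π ∈ Π_0(S)} (−1)^{n−|π|} n^{|π|} ∏_{B∈π} (|B|−1)! ≠ 0, where the sum runs over all set partitions π of {1,…,n} all of whose blocks B satisfy ∑_{i∈B} g_i = 0. -/
import Mathlib

private lemma digitsum_le {p : ℕ} (hp : 2 ≤ p) :
    ∀ r q : ℕ, q < p ^ r → (p.digits q).sum ≤ r * (p - 1) := by
  intro r
  induction r with
  | zero =>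
    intro q hq
    rw [pow_zero] at hq
    have : q = 0 := by omega
    subst this; simp
  | succ r ih =>
    intro q hq
    rcases Nat.eq_zero_or_pos q with rfl | hq0
    · simp
    rw [Nat.digits_def' hp hq0]
    have hdiv : q / p < p ^ r := by
      rw [Nat.div_lt_iff_lt_mul (by omega)]
      calc q < p ^ (r + 1) := hq
        _ = p ^ r * p := by ring
    have h1 := ih (q / p) hdiv
    have h2 : q % p ≤ p - 1 := by have := Nat.mod_lt q (show 0 < p by omega); omega
    have hmul : (r + 1) * (p - 1) = r * (p - 1) + (p - 1) := by ring
    simp only [List.sum_cons]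
    omega

private lemma digitsum_lt {p : ℕ} (hp : 2 ≤ p) :
    ∀ r q : ℕ, q + 1 < p ^ r → (p.digits q).sum < r * (p - 1) := by
  intro r
  induction r with
  | zero => intro q hq; rw [pow_zero] at hq; omega
  | succ r ih =>
    intro q hq
    have hmul : (r + 1) * (p - 1) = r * (p - 1) + (p - 1) := by ring
    rcases Nat.eq_zero_or_pos q with rfl | hq0
    · simp only [Nat.digits_zero, List.sum_nil]
      omega
    rw [Nat.digits_def' hp hq0]
    have hdiv : q / p < p ^ r := by
      rw [Nat.div_lt_iff_lt_mul (by omega)]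
      calc q < p ^ (r + 1) := by omega
        _ = p ^ r * p := by ring
    have h2 : q % p ≤ p - 1 := by have := Nat.mod_lt q (show 0 < p by omega); omega
    simp only [List.sum_cons]
    rcases Nat.lt_or_ge (q / p + 1) (p ^ r) with hlt | hge
    · have h1 := ih (q / p) hlt
      omega
    · have hdm := Nat.div_add_mod q p
      have h1 : (p.digits (q / p)).sum ≤ r * (p - 1) := digitsum_le hp r (q / p) hdiv
      have h1p : 1 ≤ p ^ r := Nat.one_le_pow _ _ (by omega)
      have hle' : p ≤ p ^ (r + 1) := Nat.le_self_pow (by omega) p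
      have hppow : p * (p ^ r - 1) = p ^ (r + 1) - p := by
        zify [h1p, hle']
        rw [pow_succ]; ring
      generalize hD : q / p = D at hdiv hge h1 hdm
      generalize hM : q % p = M at h2 hdm ⊢
      have hqp : D = p ^ r - 1 := by omega
      subst hqp
      rw [hppow] at hdm
      omega

private lemma digitsum_pred_pow {p : ℕ} (hp : 2 ≤ p) :
    ∀ r : ℕ, (p.digits (p ^ r - 1)).sum = r * (p - 1) := by
  intro r
  induction r with
  | zero => simp
  | succ r ih =>
    have h1p : 1 ≤ p ^ r := Nat.one_le_pow _ _ (by omega)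
    have hkey : p ^ (r + 1) - 1 = p * (p ^ r - 1) + (p - 1) := by
      zify [h1p, show 1 ≤ p ^ (r + 1) from Nat.one_le_pow _ _ (by omega), show 1 ≤ p by omega]
      rw [pow_succ]; ring
    have hpos : 0 < p ^ (r + 1) - 1 := by
      have : p ≤ p ^ (r + 1) := Nat.le_self_pow (by omega) p
      omega
    rw [Nat.digits_def' hp hpos]
    have hmod : (p ^ (r + 1) - 1) % p = p - 1 := by
      rw [hkey, Nat.mul_add_mod]; exact Nat.mod_eq_of_lt (by omega)
    have hdivv : (p ^ (r + 1) - 1) / p = p ^ r - 1 := by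
      rw [hkey, Nat.mul_add_div (by omega)]
      rw [Nat.div_eq_of_lt (by omega), add_zero]
    rw [hmod, hdivv, List.sum_cons, ih]
    have hmul : (r + 1) * (p - 1) = r * (p - 1) + (p - 1) := by ring
    omega

/-- **Nonvanishing of the zero-sum partition sum in the prime power case.**
If `|G| = n = p ^ r` and `g : Fin n → G` is a zero-sum sequence, then
`∑_{π ∈ Π₀(S)} (−1)^{n−|π|} n^{|π|} ∏_{B ∈ π} (|B|−1)! ≠ 0`, the sum running over all
set partitions of `{1,…,n}` all of whose blocks are zero-sum. -/
theorem stmt_5 {G : Type*} [AddCommGroup G] [Fintype G] [DecidableEq G]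
    (p r n : ℕ) (hp : p.Prime) (hr : 1 ≤ r) (hn : Fintype.card G = n) (hpr : n = p ^ r)
    (g : Fin n → G) (hzero : ∑ i, g i = 0) :
    (∑ π ∈ Finset.univ.filter
        (fun π : Finpartition (Finset.univ : Finset (Fin n)) =>
          ∀ B ∈ π.parts, ∑ i ∈ B, g i = 0),
      (-1 : ℤ) ^ (n - π.parts.card) * (n : ℤ) ^ π.parts.card *
        ∏ B ∈ π.parts, (Nat.factorial (B.card - 1) : ℤ)) ≠ 0 := by
  haveI : Fact p.Prime := ⟨hp⟩
  have hp2 : 2 ≤ p := hp.two_le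
  have hn2 : 2 ≤ n := by
    rw [hpr]
    calc 2 ≤ p := hp2
      _ = p ^ 1 := (pow_one p).symm
      _ ≤ p ^ r := Nat.pow_le_pow_right (by omega) hr
  have huniv_card : (Finset.univ : Finset (Fin n)).card = n := by simp
  have huniv_ne : (Finset.univ : Finset (Fin n)) ≠ ⊥ := by
    intro h
    have : (Finset.univ : Finset (Fin n)).card = 0 := by rw [h]; simp
    omega
  set π₀ : Finpartition (Finset.univ : Finset (Fin n)) := Finpartition.indiscrete huniv_ne
    with hπ₀def
  have hπ₀parts : π₀.parts = {Finset.univ} := rfl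
  set f : Finpartition (Finset.univ : Finset (Fin n)) → ℤ := fun π =>
    (-1 : ℤ) ^ (n - π.parts.card) * (n : ℤ) ^ π.parts.card *
      ∏ B ∈ π.parts, (Nat.factorial (B.card - 1) : ℤ) with hfdef
  set S := Finset.univ.filter
    (fun π : Finpartition (Finset.univ : Finset (Fin n)) =>
      ∀ B ∈ π.parts, ∑ i ∈ B, g i = 0) with hSdef
  have hπ₀S : π₀ ∈ S := by
    rw [hSdef, Finset.mem_filter]
    refine ⟨Finset.mem_univ _, ?_⟩
    intro B hB
    rw [hπ₀parts, Finset.mem_singleton] at hB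
    subst hB
    exact hzero
  set V := padicValNat p n.factorial with hVdef
  set L := fun m : ℕ => padicValNat p m.factorial with hLdef
  have hfacn : n.factorial = n * (n - 1).factorial := by
    conv_lhs => rw [show n = (n - 1) + 1 by omega]
    rw [Nat.factorial_succ]
    congr 2
    omega
  have hVmul : V = r + L (n - 1) := by
    rw [hVdef, hfacn, padicValNat.mul (by omega) (Nat.factorial_ne_zero _), hpr,
      padicValNat.prime_pow]
  have hLegendre : ∀ m : ℕ, (p - 1) * L m = m - (p.digits m).sum :=
    fun m => sub_one_mul_padicValNat_factorial m
  have hVval : (p - 1) * V = n - 1 := by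
    rw [hVmul, Nat.mul_add, hLegendre]
    have hds : (p.digits (n - 1)).sum = r * (p - 1) := by
      rw [hpr]; exact digitsum_pred_pow hp2 r
    have hle : (p.digits (n - 1)).sum ≤ n - 1 := Nat.digit_sum_le _ _
    rw [hds]
    have hcomm : (p - 1) * r = r * (p - 1) := by ring
    omega
  -- key divisibility for partitions other than π₀
  have hdvd : ∀ π ∈ S.erase π₀, (p : ℤ) ^ (V + 1) ∣ f π := by
    intro π hπ
    rw [Finset.mem_erase] at hπ
    obtain ⟨hne, hmem⟩ := hπ
    set k := π.parts.card with hkdef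
    have hk2 : 2 ≤ k := by
      rcases Nat.lt_or_ge k 2 with h | h
      · exfalso
        interval_cases k
        · have := π.parts_nonempty huniv_ne
          rw [← Finset.card_pos] at this
          omega
        · obtain ⟨B, hB⟩ := Finset.card_eq_one.mp hkdef.symm
          have hsup := π.sup_parts
          rw [hB, Finset.sup_singleton] at hsup
          simp only [id_eq] at hsup
          apply hne
          ext x
          rw [hB, hπ₀parts, hsup]
      · exact h
    have hcard_le : ∀ B ∈ π.parts, B.card ≤ n - 1 := by
      intro B hB
      obtain ⟨B', hB', hBB'⟩ :=
        Finset.exists_mem_ne (show 1 < π.parts.card by omega) B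
      have hdisj : Disjoint B B' := π.disjoint hB hB' (Ne.symm hBB')
      have hB'pos : 0 < B'.card := Finset.card_pos.mpr (π.nonempty_of_mem_parts hB')
      have hsub : B ∪ B' ⊆ Finset.univ := Finset.subset_univ _
      have hcc := Finset.card_le_card hsub
      rw [Finset.card_union_of_disjoint hdisj, huniv_card] at hcc
      omega
    have hblock : ∀ B ∈ π.parts, B.card ≤ r * (p - 1) + (p - 1) * L (B.card - 1) := by
      intro B hB
      have hb1 : 1 ≤ B.card := Finset.card_pos.mpr (π.nonempty_of_mem_parts hB)
      have hbn : B.card ≤ n - 1 := hcard_le B hB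
      have hlt : (p.digits (B.card - 1)).sum < r * (p - 1) := by
        apply digitsum_lt hp2
        rw [← hpr]; omega
      have hle : (p.digits (B.card - 1)).sum ≤ B.card - 1 := Nat.digit_sum_le _ _
      rw [hLegendre]
      omega
    have hsumcard : ∑ B ∈ π.parts, B.card = n := by
      rw [π.sum_card_parts, huniv_card]
    have hineq : V + 1 ≤ r * k + ∑ B ∈ π.parts, L (B.card - 1) := by
      have h1 : (p - 1) * V < (p - 1) * (r * k + ∑ B ∈ π.parts, L (B.card - 1)) := by
        rw [hVval, Nat.mul_add, Finset.mul_sum]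
        have h2 : n ≤ ∑ B ∈ π.parts, (r * (p - 1) + (p - 1) * L (B.card - 1)) :=
          calc n = ∑ B ∈ π.parts, B.card := hsumcard.symm
            _ ≤ _ := Finset.sum_le_sum hblock
        rw [Finset.sum_add_distrib, Finset.sum_const, smul_eq_mul, ← hkdef] at h2
        have h3 : (p - 1) * (r * k) = k * (r * (p - 1)) := by ring
        omega
      have := Nat.lt_of_mul_lt_mul_left h1
      omega
    have hdvdnat : p ^ (V + 1) ∣ n ^ k * ∏ B ∈ π.parts, (B.card - 1).factorial := by
      have h1 : p ^ (r * k) * ∏ B ∈ π.parts, p ^ (L (B.card - 1)) ∣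
          n ^ k * ∏ B ∈ π.parts, (B.card - 1).factorial := by
        apply mul_dvd_mul
        · rw [hpr, ← pow_mul]
        · exact Finset.prod_dvd_prod_of_dvd _ _ (fun B _ => pow_padicValNat_dvd)
      rw [Finset.prod_pow_eq_pow_sum, ← pow_add] at h1
      exact dvd_trans (pow_dvd_pow p hineq) h1
    rw [hkdef] at hdvdnat
    simp only [hfdef]
    rw [mul_assoc]
    apply Dvd.dvd.mul_left
    have hcast : ((n : ℤ) ^ π.parts.card * ∏ B ∈ π.parts, (Nat.factorial (B.card - 1) : ℤ)) =
        ((n ^ π.parts.card * ∏ B ∈ π.parts, (B.card - 1).factorial : ℕ) : ℤ) := by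
      push_cast; ring
    rw [hcast]
    exact_mod_cast Int.natCast_dvd_natCast.mpr hdvdnat
  -- π₀'s term is not divisible
  have hnotdvd : ¬ (p : ℤ) ^ (V + 1) ∣ f π₀ := by
    intro h
    have hfval : f π₀ = (-1 : ℤ) ^ (n - 1) * ((n : ℤ) * (Nat.factorial (n - 1) : ℤ)) := by
      simp only [hfdef]
      rw [hπ₀parts]
      simp only [Finset.card_singleton, Finset.prod_singleton, huniv_card, pow_one]
      ring
    have h2 : (p : ℤ) ^ (V + 1) ∣ ((n : ℤ) * (Nat.factorial (n - 1) : ℤ)) := by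
      have h5 := h.mul_left ((-1 : ℤ) ^ (n - 1))
      rw [hfval, ← mul_assoc, ← pow_add, ← two_mul, pow_mul] at h5
      simpa using h5
    have h3 : ((n : ℤ) * (Nat.factorial (n - 1) : ℤ)) = ((n.factorial : ℕ) : ℤ) := by
      rw [hfacn]; push_cast; ring
    rw [h3] at h2
    have h4 : p ^ (V + 1) ∣ n.factorial := by exact_mod_cast h2
    exact pow_succ_padicValNat_not_dvd (Nat.factorial_ne_zero n) h4
  -- assemble
  intro h0
  have hsplit : f π₀ + ∑ π ∈ S.erase π₀, f π = ∑ π ∈ S, f π :=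
    Finset.add_sum_erase S f hπ₀S
  have h0' : ∑ π ∈ S, f π = 0 := h0
  have hrest : (p : ℤ) ^ (V + 1) ∣ ∑ π ∈ S.erase π₀, f π :=
    Finset.dvd_sum hdvd
  apply hnotdvd
  have hfneg : f π₀ = - ∑ π ∈ S.erase π₀, f π := by
    rw [h0'] at hsplit; linarith
  rw [hfneg]
  exact hrest.neg_right
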